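/- There exists δ₀ > 0 such that for every δ with 0 < δ < δ₀, the set {(e,p) ∈ S²×S² : f(e,p) < −δ} is nonempty and path-connected. -/

import Mathlib

noncomputable section
open Matrix
open RealInnerProductSpace

abbrev E3 := EuclideanSpace ℝ (Fin 3)

/-- The bilinear form `⟨u, Q v⟩` associated with a 3×3 matrix `Q`. -/
def bil (Q : Matrix (Fin 3) (Fin 3) ℝ) (u v : E3) : ℝ := ∑ i, ∑ j, u i * Q i j * v j

/-- The Euclidean dot product on `ℝ³`. -/
def dot (u v : E3) : ℝ := ∑ i, u i * v i

/-- The dipole-quadrupole interaction `f(e,p) = 5(p·e)⟨e,Qe⟩ − 2⟨e,Qp⟩`. -/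
def f (Q : Matrix (Fin 3) (Fin 3) ℝ) (e p : E3) : ℝ :=
  5 * (dot p e) * bil Q e e - 2 * bil Q e p


def Mlin (Q : Matrix (Fin 3) (Fin 3) ℝ) : E3 →ₗ[ℝ] E3 where
  toFun x := WithLp.toLp 2 (Q.mulVec x)
  map_add' x y := by simp [Matrix.mulVec_add]
  map_smul' c x := by simp [Matrix.mulVec_smul]

lemma dot_eq_inner (u v : E3) : dot u v = ⟪u, v⟫ := by
  simp [dot, PiLp.inner_apply]; exact Finset.sum_congr rfl fun _ _ => mul_comm _ _

lemma bil_eq_inner (Q : Matrix (Fin 3) (Fin 3) ℝ) (u v : E3) : bil Q u v = ⟪u, Mlin Q v⟫ := by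
  simp [bil, PiLp.inner_apply, Mlin, Matrix.mulVec, dotProduct, Finset.mul_sum, mul_assoc]; exact Finset.sum_congr rfl fun _ _ => by rw [Finset.sum_mul]; exact Finset.sum_congr rfl fun _ _ => by ring

lemma sa (Q : Matrix (Fin 3) (Fin 3) ℝ) (hsym : Qᵀ = Q) (x y : E3) :
    ⟪Mlin Q x, y⟫ = ⟪x, Mlin Q y⟫ := by
  simp only [PiLp.inner_apply, Mlin, LinearMap.coe_mk, AddHom.coe_mk, Matrix.mulVec,
    dotProduct, RCLike.inner_apply, conj_trivial]
  simp_rw [Finset.sum_mul, Finset.mul_sum]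
  rw [Finset.sum_comm]
  refine Finset.sum_congr rfl fun i _ => Finset.sum_congr rfl fun j _ => ?_
  have : Q j i = Q i j := by conv_lhs => rw [← hsym, Matrix.transpose_apply]
  rw [this]; ring

def Vv (Q : Matrix (Fin 3) (Fin 3) ℝ) (e : E3) : E3 :=
  (5 * bil Q e e) • e - (2:ℝ) • (Mlin Q e)

lemma f_eq (Q : Matrix (Fin 3) (Fin 3) ℝ) (hsym : Qᵀ = Q) (e p : E3) :
    f Q e p = ⟪Vv Q e, p⟫ := by
  simp only [f, Vv, inner_sub_left, real_inner_smul_left]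
  rw [bil_eq_inner, ← sa Q hsym, dot_eq_inner, real_inner_comm p e,
    bil_eq_inner Q e p, ← sa Q hsym e p]
  ring

lemma cont_Vv (Q : Matrix (Fin 3) (Fin 3) ℝ) : Continuous (Vv Q) := by
  have hM : Continuous fun e : E3 => Mlin Q e := (Mlin Q).continuous_of_finiteDimensional
  have hb : Continuous fun e : E3 => bil Q e e := by
    simp only [fun e => bil_eq_inner Q e e]
    exact continuous_inner.comp (continuous_id.prodMk hM)
  exact ((continuous_const.mul hb).smul continuous_id).sub (hM.const_smul (2:ℝ))

lemma normVv (Q : Matrix (Fin 3) (Fin 3) ℝ) {e : E3} (he : ‖e‖ = 1) :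
    ‖Vv Q e‖^2 = 5 * ⟪e, Mlin Q e⟫^2 + 4 * ‖Mlin Q e‖^2 := by
  have h := norm_sub_sq_real ((5 * bil Q e e) • e) ((2:ℝ) • (Mlin Q e))
  rw [Vv]
  rw [h, norm_smul, norm_smul, real_inner_smul_left, real_inner_smul_right,
    bil_eq_inner]
  rw [he]
  rw [Real.norm_eq_abs, Real.norm_eq_abs]
  rw [mul_pow, mul_pow, sq_abs, sq_abs]
  ring


lemma cap_joined {v : E3} {δ : ℝ} (hδ : 0 < δ) {p q : E3} (hp : ‖p‖ = 1) (hq : ‖q‖ = 1)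
    (hvp : ⟪v, p⟫ < -δ) (hvq : ⟪v, q⟫ < -δ) :
    JoinedIn {x : E3 | ‖x‖ = 1 ∧ ⟪v, x⟫ < -δ} p q := by
  set c : ℝ → E3 := fun t => (1 - t) • p + t • q with hc
  have hinner : ∀ t : ℝ, 0 ≤ t → t ≤ 1 → ⟪v, c t⟫ < -δ := by
    intro t h0 h1
    have : ⟪v, c t⟫ = (1 - t) * ⟪v, p⟫ + t * ⟪v, q⟫ := by
      show ⟪v, (1 - t) • p + t • q⟫ = _
      rw [inner_add_right, real_inner_smul_right, real_inner_smul_right]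
    rw [this]
    have h2 : (1 - t) * (⟪v, p⟫ + δ) ≤ 0 :=
      mul_nonpos_of_nonneg_of_nonpos (by linarith) (by linarith)
    rcases lt_or_ge 0 t with ht | ht
    · have h3 : t * (⟪v, q⟫ + δ) < 0 := mul_neg_of_pos_of_neg ht (by linarith)
      nlinarith
    · have ht0 : t = 0 := le_antisymm ht h0
      rw [ht0]; ring_nf; linarith
  have hne : ∀ t : ℝ, 0 ≤ t → t ≤ 1 → c t ≠ 0 := by
    intro t h0 h1 h
    have := hinner t h0 h1
    rw [h, inner_zero_right] at this; linarith
  have hle : ∀ t : ℝ, 0 ≤ t → t ≤ 1 → ‖c t‖ ≤ 1 := by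
    intro t h0 h1
    calc ‖c t‖ ≤ ‖(1-t) • p‖ + ‖t • q‖ := norm_add_le _ _
    _ = (1-t) + t := by
        rw [norm_smul, norm_smul, hp, hq, Real.norm_eq_abs, Real.norm_eq_abs,
          abs_of_nonneg (by linarith), abs_of_nonneg h0]; ring
    _ = 1 := by ring
  have hcont : Continuous fun t : unitInterval => ‖c t‖⁻¹ • c t := by
    have h1 : Continuous fun t : unitInterval => c t := by
      apply Continuous.add
      · exact (continuous_const.sub continuous_subtype_val).smul continuous_const
      · exact continuous_subtype_val.smul continuous_const
    exact ((h1.norm.inv₀ fun t =>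
      norm_ne_zero_iff.2 (hne t t.2.1 t.2.2)).smul h1)
  refine ⟨⟨⟨fun t => ‖c t‖⁻¹ • c t, hcont⟩, ?_, ?_⟩, ?_⟩
  · show ‖c 0‖⁻¹ • c 0 = p
    simp [hc, hp]
  · show ‖c 1‖⁻¹ • c 1 = q
    simp [hc, hq]
  · intro t
    have h0 := t.2.1; have h1 := t.2.2
    have hpos : 0 < ‖c t‖ := norm_pos_iff.2 (hne t h0 h1)
    constructor
    · show ‖‖c t‖⁻¹ • c t‖ = 1
      rw [norm_smul, Real.norm_eq_abs, abs_of_nonneg (by positivity)]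
      field_simp
    · show ⟪v, ‖c t‖⁻¹ • c t⟫ < -δ
      rw [real_inner_smul_right]
      have hi := hinner t h0 h1
      have hinv : 1 ≤ ‖c t‖⁻¹ := by
        rw [le_inv_comm₀] <;> simp [hle t h0 h1, hpos]
      nlinarith


lemma rank_K {w : E3} (hw : ‖w‖ = 1) : 1 < Module.rank ℝ ((ℝ ∙ w)ᗮ : Submodule ℝ E3) := by
  have hw0 : w ≠ 0 := fun h => by rw [h, norm_zero] at hw; norm_num at hw
  have h1 : Module.finrank ℝ (ℝ ∙ w : Submodule ℝ E3) = 1 := finrank_span_singleton hw0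
  have h2 := Submodule.finrank_add_finrank_orthogonal (K := (ℝ ∙ w : Submodule ℝ E3))
  have h3 : Module.finrank ℝ E3 = 3 := by simp [finrank_euclideanSpace]
  have h4 : Module.finrank ℝ ((ℝ ∙ w)ᗮ : Submodule ℝ E3) = 2 := by omega
  rw [← Module.finrank_eq_rank, h4]
  norm_num

lemma equator_joined {w : E3} (hw : ‖w‖ = 1) :
    (∃ x₀ : E3, ‖x₀‖ = 1 ∧ ⟪w, x₀⟫ = 0) ∧
      ∀ x y : E3, ‖x‖ = 1 → ⟪w, x⟫ = 0 → ‖y‖ = 1 → ⟪w, y⟫ = 0 →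
        JoinedIn {z : E3 | ‖z‖ = 1 ∧ ⟪w, z⟫ = 0} x y := by
  set K : Submodule ℝ E3 := (ℝ ∙ w)ᗮ with hK
  have hrank := rank_K hw
  constructor
  · have hne : K ≠ ⊥ := by
      intro h
      have h2 := hrank
      rw [← hK, h] at h2; simp at h2
    obtain ⟨v, hvK, hv0⟩ := Submodule.exists_mem_ne_zero_of_ne_bot hne
    refine ⟨‖v‖⁻¹ • v, ?_, ?_⟩
    · rw [norm_smul, Real.norm_eq_abs, abs_inv, abs_norm,
        inv_mul_cancel₀ (norm_ne_zero_iff.2 hv0)]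
    · rw [real_inner_smul_right,
        Submodule.mem_orthogonal_singleton_iff_inner_right.mp hvK, mul_zero]
  · intro x y hx hxw hy hyw
    have hxK : x ∈ K := Submodule.mem_orthogonal_singleton_iff_inner_right.mpr hxw
    have hyK : y ∈ K := Submodule.mem_orthogonal_singleton_iff_inner_right.mpr hyw
    have hsph := isPathConnected_sphere hrank (0 : K) zero_le_one
    have hxs : (⟨x, hxK⟩ : K) ∈ Metric.sphere (0 : K) 1 := by
      simp [Submodule.norm_coe, hx]
    have hys : (⟨y, hyK⟩ : K) ∈ Metric.sphere (0 : K) 1 := by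
      simp [Submodule.norm_coe, hy]
    have hj := hsph.joinedIn _ hxs _ hys
    have him := hj.map (continuous_subtype_val : Continuous ((↑) : K → E3))
    refine him.mono ?_
    rintro z ⟨⟨z', hz'K⟩, hz's, rfl⟩
    simp only [Metric.mem_sphere, dist_zero_right] at hz's
    exact ⟨hz's, Submodule.mem_orthogonal_singleton_iff_inner_right.mp hz'K⟩

lemma pyth {w u : E3} (hw : ‖w‖ = 1) (hu : ‖u‖ = 1) (ho : ⟪w, u⟫ = 0) (a b : ℝ) :
    ‖a • w + b • u‖^2 = a^2 + b^2 := by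
  rw [norm_add_sq_real, norm_smul, norm_smul, real_inner_smul_left, real_inner_smul_right,
    ho, hw, hu]
  simp [Real.norm_eq_abs, mul_pow, sq_abs]

lemma norm_eq_one_of_sq {x : E3} (h : ‖x‖^2 = 1) : ‖x‖ = 1 := by
  have h2 : (‖x‖ - 1) * (‖x‖ + 1) = 0 := by nlinarith
  rcases mul_eq_zero.1 h2 with h3 | h3
  · linarith
  · linarith [norm_nonneg x]

lemma decomp (Q : Matrix (Fin 3) (Fin 3) ℝ) (hsym : Qᵀ = Q) {w u : E3} (hw : ‖w‖ = 1)
    (hu : ‖u‖ = 1) (ho : ⟪w, u⟫ = 0) (hMw : Mlin Q w = 0) (a b : ℝ) (hab : a^2 + b^2 = 1) :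
    ‖Vv Q (a • w + b • u)‖^2 =
      5 * (b^2 * ⟪u, Mlin Q u⟫)^2 + 4 * (b^2 * ‖Mlin Q u‖^2) := by
  set x := a • w + b • u with hx
  have hx1 : ‖x‖ = 1 := norm_eq_one_of_sq (by rw [hx, pyth hw hu ho]; exact hab)
  have hMx : Mlin Q x = b • Mlin Q u := by
    rw [hx, map_add, LinearMap.map_smul, LinearMap.map_smul, hMw, smul_zero, zero_add]
  have hwMu : ⟪w, Mlin Q u⟫ = 0 := by
    rw [← sa Q hsym w u, hMw, inner_zero_left]
  have hip : ⟪x, Mlin Q x⟫ = b^2 * ⟪u, Mlin Q u⟫ := by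
    rw [hMx, real_inner_smul_right, hx, inner_add_left, real_inner_smul_left,
      real_inner_smul_left, hwMu]
    ring
  have hnM : ‖Mlin Q x‖^2 = b^2 * ‖Mlin Q u‖^2 := by
    rw [hMx, norm_smul]
    simp [Real.norm_eq_abs, mul_pow, sq_abs]
  rw [normVv Q hx1, hip, hnM]

set_option maxHeartbeats 2000000 in

lemma EB (Q : Matrix (Fin 3) (Fin 3) ℝ) (hsym : Qᵀ = Q) {δ μ : ℝ} (hδ : 0 < δ) (hδμ : δ < μ)
    {w : E3} (hw : ‖w‖ = 1) (hMw : Mlin Q w = 0)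
    (hlow : ∀ x : E3, ⟪w, x⟫ = 0 → μ * ‖x‖ ≤ ‖Mlin Q x‖) :
    IsPathConnected {e : E3 | ‖e‖ = 1 ∧ δ < ‖Vv Q e‖} := by
  set E := {e : E3 | ‖e‖ = 1 ∧ δ < ‖Vv Q e‖} with hE
  have hμpos : 0 < μ := lt_trans hδ hδμ
  have heq_sub : ∀ z : E3, ‖z‖ = 1 → ⟪w, z⟫ = 0 → z ∈ E := by
    intro z hz hzw
    refine ⟨hz, ?_⟩
    have h1 : μ * 1 ≤ ‖Mlin Q z‖ := by simpa [hz] using hlow z hzw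
    have h2 : ‖Vv Q z‖^2 = 5 * ⟪z, Mlin Q z⟫^2 + 4 * ‖Mlin Q z‖^2 := normVv Q hz
    have h3 : δ^2 < ‖Vv Q z‖^2 := by nlinarith [sq_nonneg (⟪z, Mlin Q z⟫ : ℝ)]
    exact lt_of_pow_lt_pow_left₀ 2 (norm_nonneg _) h3
  obtain ⟨⟨x₀, hx₀n, hx₀w⟩, hjoin⟩ := equator_joined hw
  refine ⟨x₀, heq_sub x₀ hx₀n hx₀w, ?_⟩
  intro e he
  obtain ⟨he1, he2⟩ := he
  set a : ℝ := ⟪w, e⟫ with ha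
  set u : E3 := e - a • w with hu
  have hwu : ⟪w, u⟫ = 0 := by
    rw [hu, inner_sub_right, real_inner_smul_right, real_inner_self_eq_norm_sq, hw, ← ha]
    ring
  have hu0 : u ≠ 0 := by
    intro h
    have he' : e = a • w := by rw [hu, sub_eq_zero] at h; exact h
    have hM0 : Mlin Q e = 0 := by rw [he', LinearMap.map_smul, hMw, smul_zero]
    have hbil : ⟪e, Mlin Q e⟫ = (0:ℝ) := by rw [hM0, inner_zero_right]
    have hV0 : ‖Vv Q e‖^2 = 0 := by rw [normVv Q he1, hbil, hM0]; simp
    nlinarith [he2, hδ]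
  set b : ℝ := ‖u‖ with hbdef
  have hb : 0 < b := norm_pos_iff.2 hu0
  set v : E3 := b⁻¹ • u with hv
  have hv1 : ‖v‖ = 1 := by
    rw [hv, norm_smul, Real.norm_eq_abs, abs_inv, abs_norm, ← hbdef,
      inv_mul_cancel₀ (ne_of_gt hb)]
  have hwv : ⟪w, v⟫ = 0 := by rw [hv, real_inner_smul_right, hwu, mul_zero]
  have hed : e = a • w + b • v := by
    rw [hv, smul_smul, mul_inv_cancel₀ (ne_of_gt hb), one_smul, hu]
    abel
  have hab : a^2 + b^2 = 1 := by
    have h1 := pyth hw hv1 hwv a b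
    rw [← hed, he1] at h1
    linarith [h1]
  have hb1 : b ≤ 1 := by nlinarith
  set α : ℝ := ⟪v, Mlin Q v⟫ with hα
  set β : ℝ := ‖Mlin Q v‖^2 with hβ
  have hβ0 : 0 ≤ β := by rw [hβ]; positivity
  have hVe : ‖Vv Q e‖^2 = 5 * (b^2 * α)^2 + 4 * (b^2 * β) := by
    rw [hed]; exact decomp Q hsym hw hv1 hwv hMw a b hab
  -- the path from e to v
  set c : ℝ → E3 := fun t => ((1 - t) * a) • w + ((1 - t) * b + t) • v with hc
  have hcn : ∀ t : ℝ, ‖c t‖^2 = ((1 - t) * a)^2 + ((1 - t) * b + t)^2 :=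
    fun t => pyth hw hv1 hwv _ _
  have hBb : ∀ t : ℝ, 0 ≤ t → t ≤ 1 → b ≤ (1 - t) * b + t := by
    intro t h0 h1; nlinarith
  have hNpos : ∀ t : ℝ, 0 ≤ t → t ≤ 1 → 0 < ‖c t‖ := by
    intro t h0 h1
    have h2 := hcn t
    have h3 := hBb t h0 h1
    nlinarith [norm_nonneg (c t), sq_nonneg ((1 - t) * a)]
  have hmem : ∀ t : ℝ, 0 ≤ t → t ≤ 1 → ‖c t‖⁻¹ • c t ∈ E := by
    intro t h0 h1
    have hN := hNpos t h0 h1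
    set N : ℝ := ‖c t‖ with hNdef
    have hγ : N⁻¹ • c t = (N⁻¹ * ((1 - t) * a)) • w + (N⁻¹ * ((1 - t) * b + t)) • v := by
      rw [hc]; simp only [smul_add, smul_smul]
    have hγn : ‖N⁻¹ • c t‖ = 1 := by
      rw [norm_smul, Real.norm_eq_abs, abs_inv, abs_norm, ← hNdef,
        inv_mul_cancel₀ (ne_of_gt hN)]
    set a' : ℝ := N⁻¹ * ((1 - t) * a) with ha'
    set b' : ℝ := N⁻¹ * ((1 - t) * b + t) with hb'
    have hab' : a'^2 + b'^2 = 1 := by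
      have h2 := pyth hw hv1 hwv a' b'
      rw [← hγ] at h2
      rw [hγn] at h2
      linear_combination -h2
    have hbb' : b^2 ≤ b'^2 := by
      have hA2 : ((1 - t) * a)^2 ≤ a^2 := by
        nlinarith [mul_nonneg (mul_nonneg h0 (by linarith : (0:ℝ) ≤ 2 - t)) (sq_nonneg a)]
      have hB : b ≤ (1 - t) * b + t := hBb t h0 h1
      have hB2 : b^2 ≤ ((1 - t) * b + t)^2 := by nlinarith
      have hN2 : N^2 = ((1 - t) * a)^2 + ((1 - t) * b + t)^2 := hcn t
      have h5 : b'^2 * N^2 = ((1 - t) * b + t)^2 := by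
        rw [hb']; field_simp
      have h6 : b^2 * N^2 ≤ ((1 - t) * b + t)^2 := by nlinarith [sq_nonneg b, sq_nonneg a]
      nlinarith [sq_nonneg N, hN]
    refine ⟨hγn, ?_⟩
    have hVγ : ‖Vv Q (N⁻¹ • c t)‖^2 = 5 * (b'^2 * α)^2 + 4 * (b'^2 * β) := by
      rw [hγ]; exact decomp Q hsym hw hv1 hwv hMw a' b' hab'
    have hmono : ‖Vv Q e‖^2 ≤ ‖Vv Q (N⁻¹ • c t)‖^2 := by
      rw [hVe, hVγ]
      nlinarith [sq_nonneg α, sq_nonneg b, mul_le_mul_of_nonneg_left hbb' hβ0,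
        pow_le_pow_left₀ (sq_nonneg b) hbb' 2]
    have hδ2 : δ^2 < ‖Vv Q (N⁻¹ • c t)‖^2 := by
      nlinarith [he2, hδ, norm_nonneg (Vv Q e)]
    exact lt_of_pow_lt_pow_left₀ 2 (norm_nonneg _) hδ2
  have hcont : Continuous fun t : unitInterval => ‖c ↑t‖⁻¹ • c ↑t := by
    have h1 : Continuous fun t : unitInterval => c ↑t := by
      rw [hc]
      apply Continuous.add
      · exact (((continuous_const.sub continuous_subtype_val).mul continuous_const)).smul
          continuous_const
      · exact (((continuous_const.sub continuous_subtype_val).mul continuous_const).add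
          continuous_subtype_val).smul continuous_const
    exact (h1.norm.inv₀ fun t => ne_of_gt (hNpos ↑t t.2.1 t.2.2)).smul h1
  have j1 : JoinedIn E e v := by
    refine ⟨⟨⟨fun t => ‖c ↑t‖⁻¹ • c ↑t, hcont⟩, ?_, ?_⟩, fun t => hmem ↑t t.2.1 t.2.2⟩
    · show ‖c 0‖⁻¹ • c 0 = e
      have hc0 : c 0 = e := by rw [hed, hc]; norm_num
      rw [hc0, he1]; simp
    · show ‖c 1‖⁻¹ • c 1 = v
      have hc1 : c 1 = v := by rw [hc]; norm_num
      rw [hc1, hv1]; simp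
  have j2 : JoinedIn E v x₀ :=
    (hjoin v x₀ hv1 hwv hx₀n hx₀w).mono fun z hz => heq_sub z hz.1 hz.2
  exact (j1.trans j2).symm

lemma total (Q : Matrix (Fin 3) (Fin 3) ℝ) {δ : ℝ} (hδ : 0 < δ)
    (hE : IsPathConnected {e : E3 | ‖e‖ = 1 ∧ δ < ‖Vv Q e‖}) :
    ({q : E3 × E3 | ‖q.1‖ = 1 ∧ ‖q.2‖ = 1 ∧ ⟪Vv Q q.1, q.2⟫ < -δ}).Nonempty ∧
      IsPathConnected {q : E3 × E3 | ‖q.1‖ = 1 ∧ ‖q.2‖ = 1 ∧ ⟪Vv Q q.1, q.2⟫ < -δ} := by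
  set E := {e : E3 | ‖e‖ = 1 ∧ δ < ‖Vv Q e‖} with hEdef
  set S := {q : E3 × E3 | ‖q.1‖ = 1 ∧ ‖q.2‖ = 1 ∧ ⟪Vv Q q.1, q.2⟫ < -δ} with hSdef
  set n : E3 → E3 := fun e => -(‖Vv Q e‖⁻¹ • Vv Q e) with hn
  have hVne : ∀ e ∈ E, Vv Q e ≠ 0 := by
    intro e he h
    have := he.2; rw [h, norm_zero] at this; linarith
  have hnnorm : ∀ e ∈ E, ‖n e‖ = 1 := by
    intro e he
    have h0 : ‖Vv Q e‖ ≠ 0 := norm_ne_zero_iff.2 (hVne e he)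
    rw [hn]; simp only [norm_neg, norm_smul, Real.norm_eq_abs, abs_inv, abs_norm]
    field_simp
  have hninner : ∀ e ∈ E, ⟪Vv Q e, n e⟫ < -δ := by
    intro e he
    have h0 : 0 < ‖Vv Q e‖ := norm_pos_iff.2 (hVne e he)
    rw [hn]; simp only [inner_neg_right, real_inner_smul_right, real_inner_self_eq_norm_sq]
    have : ‖Vv Q e‖⁻¹ * ‖Vv Q e‖ ^ 2 = ‖Vv Q e‖ := by field_simp
    rw [this]
    linarith [he.2]
  have hmemS : ∀ e ∈ E, (e, n e) ∈ S := fun e he => ⟨he.1, hnnorm e he, hninner e he⟩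
  obtain ⟨e₀, he₀, hjoin⟩ := hE
  have key : ∀ q ∈ S, JoinedIn S q (e₀, n e₀) := by
    rintro ⟨e, p⟩ ⟨he1, hp1, hip⟩
    have heE : e ∈ E := by
      refine ⟨he1, ?_⟩
      have h1 : |⟪Vv Q e, p⟫| ≤ ‖Vv Q e‖ * ‖p‖ := abs_real_inner_le_norm _ _
      rw [hp1, mul_one] at h1
      have h2 := neg_abs_le (⟪Vv Q e, p⟫ : ℝ)
      simp only [Set.mem_setOf_eq] at hip
      linarith
    -- step 1 : (e, p) to (e, n e)
    have j1 : JoinedIn S (e, p) (e, n e) := by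
      obtain ⟨γ, hγ⟩ := cap_joined hδ hp1 (hnnorm e heE) hip (hninner e heE)
      exact ⟨(Path.refl e).prod γ, fun t => ⟨by simpa using he1, (hγ t).1, (hγ t).2⟩⟩
    -- step 2 : (e, n e) to (e₀, n e₀)
    have j2 : JoinedIn S (e, n e) (e₀, n e₀) := by
      obtain ⟨γ, hγ⟩ := (hjoin heE).symm
      have hcont : Continuous fun t : unitInterval => ((γ t, n (γ t)) : E3 × E3) := by
        refine (γ.continuous).prodMk ?_
        refine Continuous.neg ?_
        refine Continuous.smul (f := fun t : unitInterval => ‖Vv Q (γ t)‖⁻¹) ?_ ((cont_Vv Q).comp γ.continuous)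
        exact (((cont_Vv Q).comp γ.continuous).norm.inv₀
          fun t => norm_ne_zero_iff.2 (hVne _ (hγ t)))
      refine ⟨⟨⟨fun t => (γ t, n (γ t)), hcont⟩, by simp, by simp⟩, fun t => ?_⟩
      exact hmemS _ (hγ t)
    exact j1.trans j2
  refine ⟨⟨(e₀, n e₀), hmemS e₀ he₀⟩, (e₀, n e₀), hmemS e₀ he₀, fun _ hq => (key _ hq).symm⟩

lemma EA (Q : Matrix (Fin 3) (Fin 3) ℝ) {δ : ℝ}
    (hall : ∀ e : E3, ‖e‖ = 1 → δ < ‖Vv Q e‖) :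
    IsPathConnected {e : E3 | ‖e‖ = 1 ∧ δ < ‖Vv Q e‖} := by
  have hset : {e : E3 | ‖e‖ = 1 ∧ δ < ‖Vv Q e‖} = Metric.sphere (0 : E3) 1 := by
    ext e
    simp only [Set.mem_setOf_eq, mem_sphere_zero_iff_norm]
    exact ⟨fun h => h.1, fun h => ⟨h, hall e h⟩⟩
  rw [hset]
  refine isPathConnected_sphere ?_ 0 zero_le_one
  rw [← Module.finrank_eq_rank]
  have h3 : Module.finrank ℝ E3 = 3 := by simp [finrank_euclideanSpace]
  rw [h3]; norm_num

lemma norm_sq_repr (b : OrthonormalBasis (Fin 3) ℝ E3) (y : E3) :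
    ‖y‖^2 = ∑ i, ⟪b i, y⟫^2 := by
  rw [← b.repr.norm_map y, EuclideanSpace.norm_eq, Real.sq_sqrt (by positivity)]
  refine Finset.sum_congr rfl fun i _ => ?_
  rw [Real.norm_eq_abs, sq_abs, b.repr_apply_apply]

lemma normM_ge (Q : Matrix (Fin 3) (Fin 3) ℝ) (hsym : Qᵀ = Q)
    (b : OrthonormalBasis (Fin 3) ℝ E3) (lam : Fin 3 → ℝ)
    (heig : ∀ i, Mlin Q (b i) = lam i • b i) {μ : ℝ} (hμ0 : 0 ≤ μ) (x : E3)
    (h : ∀ i, ⟪b i, x⟫ ≠ 0 → μ ≤ |lam i|) : μ * ‖x‖ ≤ ‖Mlin Q x‖ := by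
  have hkey : ∀ i, ⟪b i, Mlin Q x⟫ = lam i * ⟪b i, x⟫ := by
    intro i
    rw [← sa Q hsym (b i) x, heig i, real_inner_smul_left]
  have h1 : ‖Mlin Q x‖^2 = ∑ i, (lam i * ⟪b i, x⟫)^2 := by
    rw [norm_sq_repr b]
    exact Finset.sum_congr rfl fun i _ => by rw [hkey i]
  have h2 : ‖x‖^2 = ∑ i, ⟪b i, x⟫^2 := norm_sq_repr b x
  have h3 : (μ * ‖x‖)^2 ≤ ‖Mlin Q x‖^2 := by
    rw [mul_pow, h1, h2, Finset.mul_sum]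
    refine Finset.sum_le_sum fun i _ => ?_
    by_cases hc : ⟪b i, x⟫ = (0:ℝ)
    · rw [hc]; simp
    · have h4 := h i hc
      have h5 : μ^2 ≤ lam i^2 := by nlinarith [abs_nonneg (lam i), sq_abs (lam i)]
      nlinarith [sq_nonneg (⟪b i, x⟫ : ℝ)]
  exact le_of_pow_le_pow_left₀ two_ne_zero (norm_nonneg _) h3

lemma sum_lam (Q : Matrix (Fin 3) (Fin 3) ℝ) (b : OrthonormalBasis (Fin 3) ℝ E3)
    (lam : Fin 3 → ℝ) (heig : ∀ i, Mlin Q (b i) = lam i • b i) :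
    ∑ i, lam i = Q.trace := by
  have hb : ∀ i j, (∑ k, b i k * b j k) = if i = j then (1:ℝ) else 0 := by
    intro i j
    have h := (orthonormal_iff_ite.mp b.orthonormal) i j
    simpa [PiLp.inner_apply, mul_comm] using h
  set B : Matrix (Fin 3) (Fin 3) ℝ := Matrix.of (fun i k => b i k) with hB
  have h1 : B * Bᵀ = 1 := by
    ext i j
    simp only [Matrix.mul_apply, Matrix.transpose_apply, hB, Matrix.of_apply, Matrix.one_apply]
    exact hb i j
  have h2 : Bᵀ * B = 1 := mul_eq_one_comm.mp h1
  have hcol : ∀ k l, (∑ i, b i k * b i l) = if k = l then (1:ℝ) else 0 := by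
    intro k l
    have h3 := congrFun (congrFun h2 k) l
    simpa only [Matrix.mul_apply, Matrix.transpose_apply, hB, Matrix.of_apply,
      Matrix.one_apply] using h3
  have hlam : ∀ i, lam i = ∑ k, ∑ l, b i k * (Q k l * b i l) := by
    intro i
    have h3 : ⟪b i, Mlin Q (b i)⟫ = lam i := by
      rw [heig i, real_inner_smul_right, real_inner_self_eq_norm_sq, b.orthonormal.1 i]
      norm_num
    rw [← h3]
    simp [PiLp.inner_apply, Mlin, Matrix.mulVec, dotProduct, Finset.mul_sum]; exact Finset.sum_congr rfl fun _ _ => by rw [Finset.sum_mul]; exact Finset.sum_congr rfl fun _ _ => by ring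
  rw [Finset.sum_congr rfl fun i _ => hlam i, Finset.sum_comm]
  have h4 : ∀ k, (∑ i, ∑ l, b i k * (Q k l * b i l)) = Q k k := by
    intro k
    rw [Finset.sum_comm]
    have h5 : ∀ l, (∑ i, b i k * (Q k l * b i l)) = Q k l * ∑ i, b i k * b i l := by
      intro l
      rw [Finset.mul_sum]
      exact Finset.sum_congr rfl fun i _ => by ring
    rw [Finset.sum_congr rfl fun l _ => h5 l]
    simp [hcol, mul_ite, Finset.sum_ite_eq']
  rw [Finset.sum_congr rfl fun k _ => h4 k]
  simp [Matrix.trace, Matrix.diag]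

/-- For a nonzero real symmetric traceless 3×3 matrix `Q` there exists `δ₀ > 0` such that
for every `0 < δ < δ₀` the set `{(e,p) ∈ S² × S² : f(e,p) < −δ}` is nonempty and
path-connected. -/
theorem stmt5 (Q : Matrix (Fin 3) (Fin 3) ℝ) (hsym : Qᵀ = Q) (htr : Q.trace = 0)
    (hQ : Q ≠ 0) :
    ∃ δ₀ > (0 : ℝ), ∀ δ : ℝ, 0 < δ → δ < δ₀ →
      ({q : E3 × E3 | ‖q.1‖ = 1 ∧ ‖q.2‖ = 1 ∧ f Q q.1 q.2 < -δ}).Nonempty ∧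
        IsPathConnected {q : E3 × E3 | ‖q.1‖ = 1 ∧ ‖q.2‖ = 1 ∧ f Q q.1 q.2 < -δ} := by
  have hsetEq : ∀ δ : ℝ, {q : E3 × E3 | ‖q.1‖ = 1 ∧ ‖q.2‖ = 1 ∧ f Q q.1 q.2 < -δ} =
      {q : E3 × E3 | ‖q.1‖ = 1 ∧ ‖q.2‖ = 1 ∧ ⟪Vv Q q.1, q.2⟫ < -δ} := by
    intro δ
    ext q
    simp only [Set.mem_setOf_eq, f_eq Q hsym]
  have hherm : Q.IsHermitian := by
    show Qᴴ = Q
    ext i j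
    simp only [Matrix.conjTranspose_apply, star_trivial]
    exact congrFun (congrFun hsym i) j
  set b := hherm.eigenvectorBasis with hbdef
  set lam := hherm.eigenvalues with hlamdef
  have heig : ∀ i, Mlin Q (b i) = lam i • b i := fun i => by
    ext k; simpa [Mlin] using congrFun (hherm.mulVec_eigenvectorBasis i) k
  have htr' : ∑ i, lam i = 0 := by rw [sum_lam Q b lam heig, htr]
  have hnotall : ¬ (∀ i, lam i = 0) := by
    intro hall
    apply hQ
    have hM0 : ∀ x : E3, Mlin Q x = 0 := by
      intro x
      calc Mlin Q x = Mlin Q (∑ i, b.repr x i • b i) := by rw [b.sum_repr x]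
        _ = ∑ i, b.repr x i • Mlin Q (b i) := by
            rw [map_sum]
            exact Finset.sum_congr rfl fun i _ => by rw [LinearMap.map_smul]
        _ = 0 := by simp [heig, hall]
    ext i j
    have h2 := congrArg (· i) (hM0 (EuclideanSpace.single j 1))
    simp only [Mlin, LinearMap.coe_mk, AddHom.coe_mk, PiLp.toLp_apply, PiLp.zero_apply, Matrix.mulVec,
      dotProduct] at h2
    rw [Finset.sum_eq_single j] at h2
    · simpa [EuclideanSpace.single_apply] using h2
    · intro l _ hl
      simp [EuclideanSpace.single_apply, hl]
    · intro hj
      exact absurd (Finset.mem_univ j) hj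
  by_cases hzero : ∃ i₀, lam i₀ = 0
  · -- degenerate case : one zero eigenvalue
    obtain ⟨i₀, hi₀⟩ := hzero
    have hother : ∀ j, j ≠ i₀ → lam j ≠ 0 := by
      intro j hj hlj
      apply hnotall
      have hsum3 : lam 0 + lam 1 + lam 2 = 0 := by rw [← Fin.sum_univ_three lam]; exact htr'
      intro i
      fin_cases i₀ <;> fin_cases j <;> fin_cases i <;> simp_all <;> linarith
    have hne : (Finset.univ.erase i₀).Nonempty := by
      refine ⟨i₀ + 1, Finset.mem_erase.2 ⟨?_, Finset.mem_univ _⟩⟩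
      intro h
      have := congrArg Fin.val h
      simp [Fin.add_def] at this
      omega
    set μ := (Finset.univ.erase i₀).inf' hne (fun j => |lam j|) with hμ
    have hμpos : 0 < μ := by
      rw [hμ, Finset.lt_inf'_iff]
      exact fun j hj => abs_pos.2 (hother j (Finset.mem_erase.1 hj).1)
    have hw : ‖b i₀‖ = 1 := b.orthonormal.1 i₀
    have hMw : Mlin Q (b i₀) = 0 := by rw [heig i₀, hi₀, zero_smul]
    refine ⟨μ, hμpos, fun δ hδ hδμ => ?_⟩
    rw [hsetEq δ]
    refine total Q hδ ?_
    refine EB Q hsym hδ hδμ hw hMw ?_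
    intro x hx
    refine normM_ge Q hsym b lam heig hμpos.le x ?_
    intro i hi
    rcases eq_or_ne i i₀ with rfl | hii
    · exact absurd hx hi
    · exact Finset.inf'_le _ (Finset.mem_erase.2 ⟨hii, Finset.mem_univ _⟩)
  · -- nondegenerate case : all eigenvalues nonzero
    push_neg at hzero
    set μ := Finset.univ.inf' ⟨0, Finset.mem_univ 0⟩ (fun j => |lam j|) with hμ
    have hμpos : 0 < μ := by
      rw [hμ]; refine (Finset.lt_inf'_iff _).2 ?_
      exact fun j _ => abs_pos.2 (hzero j)
    refine ⟨μ, hμpos, fun δ hδ hδμ => ?_⟩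
    rw [hsetEq δ]
    refine total Q hδ ?_
    refine EA Q ?_
    intro e he
    have h1 : μ * ‖e‖ ≤ ‖Mlin Q e‖ :=
      normM_ge Q hsym b lam heig hμpos.le e fun i _ => Finset.inf'_le _ (Finset.mem_univ i)
    rw [he, mul_one] at h1
    have h2 : ‖Vv Q e‖^2 = 5 * ⟪e, Mlin Q e⟫^2 + 4 * ‖Mlin Q e‖^2 := normVv Q he
    have h3 : δ^2 < ‖Vv Q e‖^2 := by nlinarith [sq_nonneg (⟪e, Mlin Q e⟫ : ℝ)]
    exact lt_of_pow_lt_pow_left₀ 2 (norm_nonneg _) h3
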